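/- Let J be a linear PSD-preserving map on Hermitian matrices such that J(Q) is positive definite whenever Q is positive definite. Then the function d(Q) = trace(J(Q)⁻¹) is convex on positive definite matrices: d(αQ₁ + (1−α)Q₂) ≤ α d(Q₁) + (1−α) d(Q₂) for all α ∈ [0,1] and positive definite Q₁, Q₂. -/

import Mathlib

/-!
For positive definite `C`, `Re tr C⁻¹` is the maximum over `X` of `2 Re tr X - Re tr (X C Xᴴ)`,
attained at `X = C⁻¹`; the maximand is affine in `C`, so `C ↦ Re tr C⁻¹` is convex on positive
definite matrices. Composing with the linear map `J`, which sends positive definite matrices to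
positive definite ones, gives convexity of `d`.
-/

open ComplexOrder Matrix

namespace Matrix

variable {n 𝕜 : Type*} [RCLike 𝕜]

theorem convex_setOf_posDef : Convex ℝ {A : Matrix n n 𝕜 | A.PosDef} := by
  intro A hA B hB a b ha hb hab
  rcases ha.eq_or_lt with rfl | ha
  · rw [zero_smul, zero_add, show b = 1 by linarith, one_smul]
    exact hB
  · exact (hA.smul ha).add_posSemidef (hB.posSemidef.smul hb)

variable [Fintype n] [DecidableEq n]

theorem PosDef.two_mul_re_trace_sub_re_trace_mul_mul_conjTranspose_le {C : Matrix n n 𝕜}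
    (hC : C.PosDef) (X : Matrix n n 𝕜) :
    2 * RCLike.re X.trace - RCLike.re (X * C * Xᴴ).trace ≤ RCLike.re C⁻¹.trace := by
  have hCinv : C * C⁻¹ = 1 := C.mul_nonsing_inv ((isUnit_iff_isUnit_det C).mp hC.isUnit)
  have hinvC : C⁻¹ * C = 1 := C.nonsing_inv_mul ((isUnit_iff_isUnit_det C).mp hC.isUnit)
  have hexpand : (X - C⁻¹) * C * (X - C⁻¹)ᴴ = X * C * Xᴴ - X - Xᴴ + C⁻¹ := by
    rw [conjTranspose_sub, hC.isHermitian.inv.eq]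
    simp only [Matrix.sub_mul, Matrix.mul_sub, Matrix.mul_assoc, hCinv, Matrix.mul_one]
    rw [← Matrix.mul_assoc C⁻¹, hinvC, Matrix.one_mul]
    abel
  have hnonneg := (hC.posSemidef.mul_mul_conjTranspose_same (X - C⁻¹)).trace_nonneg
  rw [hexpand, trace_add, trace_sub, trace_sub, trace_conjTranspose] at hnonneg
  have := (RCLike.nonneg_iff.mp hnonneg).1
  simp only [map_add, map_sub, RCLike.star_def, RCLike.conj_re] at this
  linarith

theorem convexOn_re_trace_inv :
    ConvexOn ℝ {A : Matrix n n 𝕜 | A.PosDef} fun A => RCLike.re A⁻¹.trace := by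
  refine ⟨convex_setOf_posDef, fun A hA B hB a b ha hb hab => ?_⟩
  set C := a • A + b • B
  have hC : C.PosDef := convex_setOf_posDef hA hB ha hb hab
  have hself : C⁻¹ * C * C⁻¹ᴴ = C⁻¹ := by
    rw [hC.isHermitian.inv.eq, C.nonsing_inv_mul ((isUnit_iff_isUnit_det C).mp hC.isUnit),
      Matrix.one_mul]
  have hsplit : RCLike.re (C⁻¹ * C * C⁻¹ᴴ).trace
      = a * RCLike.re (C⁻¹ * A * C⁻¹ᴴ).trace + b * RCLike.re (C⁻¹ * B * C⁻¹ᴴ).trace := by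
    simp only [C, Matrix.mul_add, Matrix.add_mul, mul_smul_comm, smul_mul_assoc, trace_add,
      trace_smul, map_add, RCLike.smul_re]
  have hA' := hA.two_mul_re_trace_sub_re_trace_mul_mul_conjTranspose_le C⁻¹
  have hB' := hB.two_mul_re_trace_sub_re_trace_mul_mul_conjTranspose_le C⁻¹
  rw [hself] at hsplit
  obtain rfl : b = 1 - a := by linarith
  simp only [smul_eq_mul]
  linarith [mul_le_mul_of_nonneg_left hA' ha, mul_le_mul_of_nonneg_left hB' hb]

end Matrix

theorem stmt4_general {M K : Type*} [Fintype K] [DecidableEq K]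
    (J : Matrix M M ℂ →ₗ[ℂ] Matrix K K ℂ)
    (hJpd : ∀ Q : Matrix M M ℂ, Q.PosDef → (J Q).PosDef)
    (Q₁ Q₂ : Matrix M M ℂ) (hQ₁ : Q₁.PosDef) (hQ₂ : Q₂.PosDef)
    (α : ℝ) (h0 : 0 ≤ α) (h1 : α ≤ 1) :
    (((J (α • Q₁ + (1 - α) • Q₂))⁻¹).trace).re
      ≤ α * (((J Q₁)⁻¹).trace).re + (1 - α) * (((J Q₂)⁻¹).trace).re :=
  (Matrix.convexOn_re_trace_inv.comp_linearMap (J.restrictScalars ℝ)).2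
    (hJpd _ hQ₁) (hJpd _ hQ₂) h0 (sub_nonneg.mpr h1) (add_sub_cancel α 1)

/-- Convexity of d(Q) = trace(J(Q)⁻¹) on positive definite matrices for a
linear PSD-preserving (and PD-preserving) map J. -/
theorem stmt4 {M K : Type*} [Fintype M] [DecidableEq M] [Fintype K] [DecidableEq K]
    (J : Matrix M M ℂ →ₗ[ℂ] Matrix K K ℂ)
    (hJ : ∀ Q : Matrix M M ℂ, Q.PosSemidef → (J Q).PosSemidef)
    (hJpd : ∀ Q : Matrix M M ℂ, Q.PosDef → (J Q).PosDef)
    (Q₁ Q₂ : Matrix M M ℂ) (hQ₁ : Q₁.PosDef) (hQ₂ : Q₂.PosDef)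
    (α : ℝ) (h0 : 0 ≤ α) (h1 : α ≤ 1) :
    (((J (α • Q₁ + (1 - α) • Q₂))⁻¹).trace).re
      ≤ α * (((J Q₁)⁻¹).trace).re + (1 - α) * (((J Q₂)⁻¹).trace).re :=
  stmt4_general J hJpd Q₁ Q₂ hQ₁ hQ₂ α h0 h1
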